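/- Let R, C, μ > 0, let n ≥ 1 be an integer with Rμ ≥ Cn, let 0 ≤ a < b and m̂ ∈ (a,b), and let m_l ≤ m_u and d_l ≤ d_u be real numbers. Suppose there exists a Borel probability measure P₀ supported on [a,b] with m_l < ∫ ρ dP₀(ρ) < m_u and d_l < ∫ |ρ−m̂| dP₀(ρ) < d_u (Slater condition). Then inf_{P ∈ 𝒫'} ∫ r_n(ρ) dP(ρ) equals the supremum of γ + θ₁ d_l − θ₂ d_u + θ₃ m_l − θ₄ m_u over γ ∈ ℝ and θ₁, θ₂, θ₃, θ₄ ≥ 0 subject to the three linear constraints (θ₁−θ₂)|a−m̂| + (θ₃−θ₄)a + γ ≤ r_n(a), (θ₃−θ₄)m̂ + γ ≤ r_n(m̂), and (θ₁−θ₂)|b−m̂| + (θ₃−θ₄)b + γ ≤ r_n(b), where 𝒫' is the set of Borel probability measures P supported on [a,b] with m_l ≤ ∫ ρ dP(ρ) ≤ m_u and d_l ≤ ∫ |ρ−m̂| dP(ρ) ≤ d_u. -/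

import Mathlib

open MeasureTheory

/-- The revenue rate function `r_n` of Naor's observable M/M/1 queue. -/
noncomputable def revenueRate (R C μ : ℝ) (n : ℕ) (ρ : ℝ) : ℝ :=
  if ρ = 1 then (R * μ - C * (n : ℝ)) * ((n : ℝ) / ((n : ℝ) + 1))
  else (R * μ - C * (n : ℝ)) * (ρ * (1 - ρ ^ n) / (1 - ρ ^ (n + 1)))

/-- The data-driven MAD ambiguity set: Borel probability measures supported on `[a,b]`
whose mean lies in `[ml, mu]` and whose MAD about `mhat` lies in `[dl, du]`. -/
def DDMADSet (a b mhat ml mu dl du : ℝ) : Set (Measure ℝ) :=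
  {P | IsProbabilityMeasure P ∧ P (Set.Icc a b)ᶜ = 0 ∧
    ml ≤ (∫ ρ, ρ ∂P) ∧ (∫ ρ, ρ ∂P) ≤ mu ∧
    dl ≤ (∫ ρ, |ρ - mhat| ∂P) ∧ (∫ ρ, |ρ - mhat| ∂P) ≤ du}

/-
On `[0, ∞)` the revenue rate is `r_n = (Rμ - Cn) (1 - 1 / S)` with `S = 1 + ρ + ⋯ + ρⁿ`, and
`1 / S` is convex because `S S'' ≤ 2 S'²` there; hence `r_n` is concave.

Weak duality: a dual-feasible `(θ₁ - θ₂) |ρ - m̂| + (θ₃ - θ₄) ρ + γ` is affine on `[a, m̂]` and on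
`[m̂, b]`, so by concavity it lies below `r_n` on `[a, b]` once it does at `a`, `m̂`, `b`;
integrating against a feasible `P` bounds the dual objective by `∫ r_n dP`.

Strong duality: the vectors `(∫ constraints dP, ∫ r_n dP) ∈ ℝ⁴ × ℝ` over probability measures `P`
on `[a, b]` form a convex set (mixtures of measures), so Slater's condition yields Lagrange
multipliers for the primal value `v`. Evaluating the Lagrangian inequality at Dirac masses at
`a`, `m̂`, `b` shows that `v` itself is a dual-feasible value, hence the largest one.
-/

open Set Filter Topology Polynomial
open scoped Pointwise

noncomputable def geomPoly (t : ℕ) : ℝ[X] := ∑ k ∈ Finset.range t, X ^ k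

lemma geomPoly_succ (t : ℕ) : geomPoly (t + 1) = geomPoly t + X ^ t :=
  Finset.sum_range_succ _ _

lemma geomPoly_succ' (t : ℕ) : geomPoly (t + 1) = 1 + X * geomPoly t := by
  simp only [geomPoly, Finset.sum_range_succ', Finset.mul_sum, pow_succ', pow_zero, add_comm]

section GeomPoly

variable {x : ℝ}

lemma eval_geomPoly_succ (t : ℕ) :
    (geomPoly (t + 1)).eval x = 1 + x * (geomPoly t).eval x := by
  simp [geomPoly_succ']

lemma eval_derivative_geomPoly_succ (t : ℕ) :
    (derivative (geomPoly (t + 1))).eval x =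
      (geomPoly t).eval x + x * (derivative (geomPoly t)).eval x := by
  simp [geomPoly_succ', derivative_mul]

lemma eval_derivative_derivative_geomPoly_succ (t : ℕ) :
    (derivative (derivative (geomPoly (t + 1)))).eval x =
      2 * (derivative (geomPoly t)).eval x + x * (derivative (derivative (geomPoly t))).eval x := by
  simp [geomPoly_succ', derivative_mul]
  ring

lemma eval_geomPoly_nonneg (hx : 0 ≤ x) (t : ℕ) : 0 ≤ (geomPoly t).eval x := by
  simp only [geomPoly, eval_finsetSum, eval_pow, eval_X]
  exact Finset.sum_nonneg fun k _ => pow_nonneg hx k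

lemma eval_geomPoly_pos (hx : 0 ≤ x) {t : ℕ} (ht : 1 ≤ t) : 0 < (geomPoly t).eval x := by
  obtain ⟨t, rfl⟩ := Nat.exists_eq_add_of_le' ht
  rw [eval_geomPoly_succ]
  nlinarith [eval_geomPoly_nonneg hx t]

lemma eval_derivative_geomPoly_le_succ (hx : 0 ≤ x) (t : ℕ) :
    (derivative (geomPoly t)).eval x ≤ (derivative (geomPoly (t + 1))).eval x := by
  rw [geomPoly_succ, derivative_add, eval_add, le_add_iff_nonneg_right]
  simp only [derivative_X_pow, eval_mul, eval_C, eval_pow, eval_X]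
  positivity

lemma eval_derivative_geomPoly_nonneg (hx : 0 ≤ x) (t : ℕ) :
    0 ≤ (derivative (geomPoly t)).eval x := by
  induction t with
  | zero => simp [geomPoly]
  | succ t ih => exact ih.trans (eval_derivative_geomPoly_le_succ hx t)

lemma eval_derivative_derivative_geomPoly_succ_le (hx : 0 ≤ x) (t : ℕ) :
    (derivative (derivative (geomPoly (t + 1)))).eval x ≤
      2 * (geomPoly t).eval x * (derivative (geomPoly t)).eval x := by
  induction t with
  | zero => simp [geomPoly]
  | succ t ih =>
    have hp := eval_derivative_geomPoly_le_succ hx t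
    rw [eval_derivative_derivative_geomPoly_succ, eval_geomPoly_succ]
    nlinarith [mul_le_mul_of_nonneg_left ih hx,
      mul_le_mul_of_nonneg_left hp (mul_nonneg hx (eval_geomPoly_nonneg hx t))]

lemma eval_geomPoly_mul_derivative_derivative_le (hx : 0 ≤ x) (t : ℕ) :
    (geomPoly t).eval x * (derivative (derivative (geomPoly t))).eval x ≤
      2 * (derivative (geomPoly t)).eval x ^ 2 := by
  induction t with
  | zero => simp [geomPoly]
  | succ t ih =>
    have hq := eval_derivative_derivative_geomPoly_succ_le hx t
    have hp := eval_derivative_geomPoly_le_succ hx t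
    rw [eval_derivative_derivative_geomPoly_succ] at hq ⊢
    rw [eval_derivative_geomPoly_succ] at hp ⊢
    rw [eval_geomPoly_succ]
    nlinarith [mul_le_mul_of_nonneg_left ih (sq_nonneg x),
      mul_le_mul_of_nonneg_left hp (eval_geomPoly_nonneg hx t)]

end GeomPoly

lemma convexOn_inv_of_mul_deriv2_le {D : Set ℝ} (hD : Convex ℝ D) {f f' f'' : ℝ → ℝ}
    (hpos : ∀ x ∈ D, 0 < f x) (hf : ∀ x ∈ D, HasDerivAt f (f' x) x)
    (hf' : ∀ x ∈ interior D, HasDerivAt f' (f'' x) x)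
    (h : ∀ x ∈ interior D, f x * f'' x ≤ 2 * f' x ^ 2) :
    ConvexOn ℝ D (fun x => (f x)⁻¹) := by
  have hD' : ∀ x ∈ interior D, x ∈ D := fun x hx => interior_subset hx
  refine convexOn_of_hasDerivWithinAt2_nonneg hD
    (f' := fun x => -f' x / f x ^ 2)
    (f'' := fun x => (2 * f' x ^ 2 - f x * f'' x) / f x ^ 3) ?_ ?_ ?_ ?_
  · exact fun x hx => ((hf x hx).continuousAt.inv₀ (hpos x hx).ne').continuousWithinAt
  · exact fun x hx => ((hf x (hD' x hx)).inv (hpos x (hD' x hx)).ne').hasDerivWithinAt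
  · intro x hx
    have hfx := (hpos x (hD' x hx)).ne'
    have hsq : HasDerivAt (fun y => f y ^ 2) (2 * f x * f' x) x := by
      simpa using (hf x (hD' x hx)).fun_pow 2
    refine ((((hf' x hx).fun_neg).fun_div hsq (pow_ne_zero 2 hfx)).congr_deriv ?_).hasDerivWithinAt
    field_simp
    ring
  · exact fun x hx => div_nonneg (by linarith [h x hx]) (pow_pos (hpos x (hD' x hx)) 3).le

lemma convexOn_inv_eval_geomPoly {t : ℕ} (ht : 1 ≤ t) :
    ConvexOn ℝ (Ici 0) (fun x => ((geomPoly t).eval x)⁻¹) :=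
  convexOn_inv_of_mul_deriv2_le (convex_Ici 0) (fun _ hx => eval_geomPoly_pos hx ht)
    (fun x _ => (geomPoly t).hasDerivAt x) (fun x _ => (derivative (geomPoly t)).hasDerivAt x)
    (fun _ hx => eval_geomPoly_mul_derivative_derivative_le (interior_subset hx) t)

lemma revenueRate_eq {R C μ ρ : ℝ} (n : ℕ) (hρ : 0 ≤ ρ) :
    revenueRate R C μ n ρ = (R * μ - C * n) * (1 - ((geomPoly (n + 1)).eval ρ)⁻¹) := by
  have hS : (geomPoly (n + 1)).eval ρ = ∑ k ∈ Finset.range (n + 1), ρ ^ k := by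
    simp [geomPoly, eval_finsetSum]
  rw [revenueRate, hS]
  split_ifs with h1
  · subst h1
    simp only [one_pow, Finset.sum_const, Finset.card_range, nsmul_eq_mul, mul_one]
    push_cast
    field_simp
    ring
  · have hpow : ρ ^ (n + 1) ≠ 1 := by
      rwa [Ne, pow_eq_one_iff_of_nonneg hρ n.succ_ne_zero]
    have h1' : ρ - 1 ≠ 0 := sub_ne_zero.mpr h1
    have hpow' : ρ ^ (n + 1) - 1 ≠ 0 := sub_ne_zero.mpr hpow
    have hpow'' : 1 - ρ ^ (n + 1) ≠ 0 := sub_ne_zero.mpr hpow.symm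
    rw [geom_sum_eq h1]
    field_simp
    ring

lemma concaveOn_revenueRate {R C μ : ℝ} {n : ℕ} (hK : C * n ≤ R * μ) :
    ConcaveOn ℝ (Ici 0) (revenueRate R C μ n) := by
  refine (((concaveOn_const 1 (convex_Ici 0)).sub
    (convexOn_inv_eval_geomPoly (Nat.le_add_left 1 n))).smul (sub_nonneg.mpr hK)).congr ?_
  intro ρ hρ
  simp [revenueRate_eq n hρ]

lemma continuousOn_revenueRate (R C μ : ℝ) (n : ℕ) :
    ContinuousOn (revenueRate R C μ n) (Ici 0) := by
  have hS : ∀ x ∈ Ici (0 : ℝ), (geomPoly (n + 1)).eval x ≠ 0 := fun x hx =>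
    (eval_geomPoly_pos hx (Nat.le_add_left 1 n)).ne'
  refine ContinuousOn.congr ?_ fun ρ hρ => revenueRate_eq (R := R) (C := C) (μ := μ) n hρ
  exact continuousOn_const.mul
    (continuousOn_const.sub ((geomPoly (n + 1)).continuous.continuousOn.inv₀ hS))

lemma ConcaveOn.affine_le_of_mem_Icc {s : Set ℝ} {f : ℝ → ℝ} (hf : ConcaveOn ℝ s f)
    {c d x α β : ℝ} (hc : c ∈ s) (hd : d ∈ s) (hx : x ∈ Icc c d)
    (hfc : α * c + β ≤ f c) (hfd : α * d + β ≤ f d) : α * x + β ≤ f x := by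
  obtain ⟨p, q, hp, hq, hpq, rfl⟩ := Icc_subset_segment hx
  have hconc := hf.2 hc hd hp hq hpq
  simp only [smul_eq_mul] at hconc ⊢
  have hc' := mul_le_mul_of_nonneg_left hfc hp
  have hd' := mul_le_mul_of_nonneg_left hfd hq
  linear_combination hconc + hc' + hd' - β * hpq

lemma ConcaveOn.abs_sub_affine_le {f : ℝ → ℝ} {a b m k α β : ℝ} (hf : ConcaveOn ℝ (Icc a b) f)
    (hm : m ∈ Icc a b) (hfa : k * |a - m| + α * a + β ≤ f a) (hfm : α * m + β ≤ f m)
    (hfb : k * |b - m| + α * b + β ≤ f b) {x : ℝ} (hx : x ∈ Icc a b) :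
    k * |x - m| + α * x + β ≤ f x := by
  have ha : a ∈ Icc a b := left_mem_Icc.2 (hm.1.trans hm.2)
  have hb : b ∈ Icc a b := right_mem_Icc.2 (hm.1.trans hm.2)
  rcases le_total x m with hxm | hmx
  · rw [abs_of_nonpos (sub_nonpos.2 hm.1)] at hfa
    have := hf.affine_le_of_mem_Icc (α := α - k) (β := k * m + β) ha hm ⟨hx.1, hxm⟩
      (by linarith) (by linarith)
    rw [abs_of_nonpos (sub_nonpos.2 hxm)]
    linarith
  · rw [abs_of_nonneg (sub_nonneg.2 hm.2)] at hfb
    have := hf.affine_le_of_mem_Icc (α := α + k) (β := β - k * m) hm hb ⟨hmx, hx.2⟩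
      (by linarith) (by linarith)
    rw [abs_of_nonneg (sub_nonneg.2 hmx)]
    linarith

lemma le_of_forall_pos_add_mul_lt {a b c : ℝ} (h : ∀ k > 0, a + k * b < c) : a ≤ c := by
  have hlim : Tendsto (fun k => a + k * b) (𝓝[>] 0) (𝓝 a) :=
    ((by fun_prop : Continuous fun k : ℝ => a + k * b).tendsto' 0 a (by simp)).mono_left
      nhdsWithin_le_nhds
  exact le_of_tendsto hlim (eventually_nhdsWithin_of_forall fun k hk => (h k hk).le)

lemma nonpos_of_forall_pos_add_mul_lt {a b c : ℝ} (h : ∀ k > 0, a + k * b < c) : b ≤ 0 := by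
  by_contra! hb
  have h1 := h 1 one_pos
  have := h ((c - a) / b) (div_pos (by linarith) hb)
  rw [div_mul_cancel₀ _ hb.ne'] at this
  linarith

lemma exists_separating_functional {ι : Type*} [Fintype ι] {A : Set ((ι → ℝ) × ℝ)}
    (hA : Convex ℝ A) {v : ℝ} (hv : ∀ p ∈ A, p.1 ≤ 0 → v ≤ p.2) :
    ∃ f : StrongDual ℝ ((ι → ℝ) × ℝ), ∀ p ∈ A, ∀ u : (ι → ℝ) × ℝ,
      (∀ i, 0 < u.1 i) → 0 < u.2 → f (p + u) < f (0, v) := by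
  set U : Set ((ι → ℝ) × ℝ) := (univ.pi fun _ => Ioi 0) ×ˢ Ioi 0
  have hU : IsOpen U := (isOpen_set_pi finite_univ fun _ _ => isOpen_Ioi).prod isOpen_Ioi
  have hUc : Convex ℝ U := (convex_pi fun _ _ => convex_Ioi 0).prod (convex_Ioi 0)
  have hx₀ : ((0 : ι → ℝ), v) ∉ A + U := by
    rintro ⟨p, hp, u, ⟨hu₁, hu₂⟩, hpu⟩
    have hp₁ : p.1 ≤ 0 := fun i => by
      have := congrArg (fun q => q.1 i) hpu
      simp only [Prod.fst_add, Pi.add_apply, Pi.zero_apply] at this ⊢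
      linarith [mem_Ioi.mp (hu₁ i (mem_univ i))]
    have hp₂ := congrArg Prod.snd hpu
    simp only [Prod.snd_add] at hp₂
    linarith [hv p hp hp₁, mem_Ioi.mp hu₂]
  obtain ⟨f, hf⟩ := geometric_hahn_banach_open_point (hA.add hUc) hU.add_left hx₀
  exact ⟨f, fun p hp u hu₁ hu₂ => hf _ (add_mem_add hp ⟨fun i _ => hu₁ i, hu₂⟩)⟩

lemma ContinuousLinearMap.apply_pi_prod {ι : Type*} [Fintype ι] [DecidableEq ι]
    (f : StrongDual ℝ ((ι → ℝ) × ℝ)) (y : ι → ℝ) (t : ℝ) :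
    f (y, t) = ∑ i, y i * f (Pi.single i 1, 0) + t * f (0, 1) := by
  have hsplit : f (y, t) = f (y, 0) + t * f (0, 1) := by
    rw [← smul_eq_mul, ← map_smul, ← map_add]
    simp
  rw [hsplit, ← ContinuousLinearMap.inl_apply (R := ℝ) (M₂ := ℝ),
    ← ContinuousLinearMap.comp_apply, ← ContinuousLinearMap.coe_coe,
    LinearMap.pi_apply_eq_sum_univ]
  have hsingle : ∀ i, (Pi.single i 1 : ι → ℝ) = fun j => if i = j then 1 else 0 := fun i => by
    ext j
    simp [Pi.single_apply, eq_comm]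
  simp [hsingle]

lemma exists_lagrange_multipliers {ι : Type*} [Fintype ι] {A : Set ((ι → ℝ) × ℝ)}
    (hA : Convex ℝ A) {v : ℝ} (hv : ∀ p ∈ A, p.1 ≤ 0 → v ≤ p.2)
    (hslater : ∃ p ∈ A, ∀ i, p.1 i < 0) :
    ∃ l : ι → ℝ, 0 ≤ l ∧ ∀ p ∈ A, v ≤ p.2 + ∑ i, l i * p.1 i := by
  classical
  obtain ⟨p₀, hp₀A, hp₀⟩ := hslater
  obtain ⟨f, hf⟩ := exists_separating_functional hA hv
  set m : ι → ℝ := fun i => f (Pi.single i 1, 0)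
  set c : ℝ := f (0, 1)
  have hf_nonpos : ∀ w : (ι → ℝ) × ℝ, 0 ≤ w → f w ≤ 0 := fun w hw =>
    nonpos_of_forall_pos_add_mul_lt (a := f (p₀ + 1)) fun k hk => by
      have hw₁ : ∀ i, 0 ≤ k * w.1 i := fun i => mul_nonneg hk.le (hw.1 i)
      have hw₂ : 0 ≤ k * w.2 := mul_nonneg hk.le hw.2
      simpa [map_add, map_smul, add_assoc] using
        hf p₀ hp₀A (1 + k • w) (fun i => by simp; linarith [hw₁ i]) (by simp; linarith)
  -- shifting the Slater point by `(-p₀.1, 1)` gives `f (0, p₀.2 + 1) < f (0, v)`, so `c ≠ 0`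
  have hc : c < 0 := by
    refine (hf_nonpos (0, 1) ⟨le_rfl, zero_le_one⟩).lt_of_ne fun hc0 => ?_
    have := hf p₀ hp₀A (-p₀.1, 1) (fun i => by simpa using hp₀ i) one_pos
    rw [show p₀ + (-p₀.1, 1) = (0, p₀.2 + 1) by ext <;> simp, f.apply_pi_prod 0,
      f.apply_pi_prod 0 v, hc0] at this
    simp at this
  have hf_le : ∀ p ∈ A, f p ≤ f (0, v) := fun p hp =>
    le_of_forall_pos_add_mul_lt (b := f 1) fun k hk => by
      simpa [map_add, map_smul] using
        hf p hp (k • 1) (fun _ => by simpa using hk) (by simpa using hk)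
  refine ⟨fun i => m i / c, fun i => div_nonneg_of_nonpos ?_ hc.le, fun p hp => ?_⟩
  · exact hf_nonpos _ ⟨Pi.single_nonneg.2 zero_le_one, le_rfl⟩
  have hfp := hf_le p hp
  rw [← Prod.mk.eta (p := p), f.apply_pi_prod p.1, f.apply_pi_prod 0 v] at hfp
  simp only [Pi.zero_apply, zero_mul, Finset.sum_const_zero, zero_add] at hfp
  have hsum : ∑ i, m i / c * p.1 i = (∑ i, p.1 i * m i) / c := by
    rw [Finset.sum_div]
    exact Finset.sum_congr rfl fun i _ => by ring
  rw [hsum]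
  have := (le_div_iff_of_neg hc).mpr (show ∑ i, p.1 i * m i ≤ (v - p.2) * c by linarith)
  linarith

section Mixture

variable {X : Type*} [MeasurableSpace X]

lemma integral_mixture {E : Type*} [NormedAddCommGroup E] [NormedSpace ℝ E] {P Q : Measure X}
    {F : X → E} (hP : Integrable F P) (hQ : Integrable F Q) {s t : ℝ} (hs : 0 ≤ s) (ht : 0 ≤ t) :
    ∫ x, F x ∂(ENNReal.ofReal s • P + ENNReal.ofReal t • Q) =
      s • ∫ x, F x ∂P + t • ∫ x, F x ∂Q := by
  rw [integral_add_measure (hP.smul_measure ENNReal.ofReal_ne_top)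
    (hQ.smul_measure ENNReal.ofReal_ne_top), integral_smul_measure, integral_smul_measure,
    ENNReal.toReal_ofReal hs, ENNReal.toReal_ofReal ht]

lemma isProbabilityMeasure_mixture {P Q : Measure X} [IsProbabilityMeasure P]
    [IsProbabilityMeasure Q] {s t : ℝ} (hs : 0 ≤ s) (ht : 0 ≤ t) (hst : s + t = 1) :
    IsProbabilityMeasure (ENNReal.ofReal s • P + ENNReal.ofReal t • Q) :=
  ⟨by simp [← ENNReal.ofReal_add hs ht, hst]⟩

variable [TopologicalSpace X] [OpensMeasurableSpace X] [T2Space X]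

lemma ContinuousOn.integrable_of_measure_compl_eq_zero {E : Type*} [NormedAddCommGroup E]
    {F : X → E} {K : Set X} (hF : ContinuousOn F K) (hK : IsCompact K) {P : Measure X}
    [IsFiniteMeasure P] (hP : P Kᶜ = 0) : Integrable F P := by
  rw [← Measure.restrict_eq_self_of_ae_mem (ae_iff.mpr hP)]
  exact hF.integrableOn_compact hK

lemma convex_integral_image {E : Type*} [NormedAddCommGroup E] [NormedSpace ℝ E]
    {F : X → E} {K : Set X} (hF : ContinuousOn F K) (hK : IsCompact K) :
    Convex ℝ ((fun P => ∫ x, F x ∂P) '' {P : Measure X | IsProbabilityMeasure P ∧ P Kᶜ = 0}) := by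
  rintro _ ⟨P, ⟨hP, hPK⟩, rfl⟩ _ ⟨Q, ⟨hQ, hQK⟩, rfl⟩ s t hs ht hst
  refine ⟨ENNReal.ofReal s • P + ENNReal.ofReal t • Q,
    ⟨isProbabilityMeasure_mixture hs ht hst, by simp [hPK, hQK]⟩, ?_⟩
  exact integral_mixture (hF.integrable_of_measure_compl_eq_zero hK hPK)
    (hF.integrable_of_measure_compl_eq_zero hK hQK) hs ht

end Mixture

section MADDuality

variable {f : ℝ → ℝ} {a b mhat ml mu dl du : ℝ}

def madConstraints (mhat ml mu dl du ρ : ℝ) : Fin 4 → ℝ :=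
  ![ml - ρ, ρ - mu, dl - |ρ - mhat|, |ρ - mhat| - du]

def madDualSet (f : ℝ → ℝ) (a b mhat ml mu dl du : ℝ) : Set ℝ :=
  {v | ∃ γ θ₁ θ₂ θ₃ θ₄ : ℝ, 0 ≤ θ₁ ∧ 0 ≤ θ₂ ∧ 0 ≤ θ₃ ∧ 0 ≤ θ₄ ∧
    v = γ + θ₁ * dl - θ₂ * du + θ₃ * ml - θ₄ * mu ∧
    (θ₁ - θ₂) * |a - mhat| + (θ₃ - θ₄) * a + γ ≤ f a ∧
    (θ₃ - θ₄) * mhat + γ ≤ f mhat ∧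
    (θ₁ - θ₂) * |b - mhat| + (θ₃ - θ₄) * b + γ ≤ f b}

lemma continuous_madConstraints : Continuous (madConstraints mhat ml mu dl du) := by
  unfold madConstraints
  fun_prop

section Integrals

variable {P : Measure ℝ} [IsProbabilityMeasure P]

lemma integrable_abs_sub_of_measure_compl_eq_zero (hP : P (Icc a b)ᶜ = 0) :
    Integrable (fun ρ => |ρ - mhat|) P :=
  (continuous_abs.comp (continuous_sub_right mhat)).continuousOn
    |>.integrable_of_measure_compl_eq_zero isCompact_Icc hP

lemma integrable_id_of_measure_compl_eq_zero (hP : P (Icc a b)ᶜ = 0) :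
    Integrable (fun ρ : ℝ => ρ) P :=
  continuousOn_id.integrable_of_measure_compl_eq_zero isCompact_Icc hP

lemma integral_madConstraints_prod (hfc : ContinuousOn f (Icc a b)) (hP : P (Icc a b)ᶜ = 0) :
    ∫ ρ, (madConstraints mhat ml mu dl du ρ, f ρ) ∂P =
      (![ml - ∫ ρ, ρ ∂P, (∫ ρ, ρ ∂P) - mu, dl - ∫ ρ, |ρ - mhat| ∂P,
        (∫ ρ, |ρ - mhat| ∂P) - du], ∫ ρ, f ρ ∂P) := by
  have hg : ∀ i, Integrable (fun ρ => madConstraints mhat ml mu dl du ρ i) P := fun i =>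
    ((continuous_apply i).comp continuous_madConstraints).continuousOn
      |>.integrable_of_measure_compl_eq_zero isCompact_Icc hP
  have hid := integrable_id_of_measure_compl_eq_zero hP
  have habs := integrable_abs_sub_of_measure_compl_eq_zero (mhat := mhat) hP
  rw [integral_pair (Integrable.of_eval hg)
    (hfc.integrable_of_measure_compl_eq_zero isCompact_Icc hP)]
  congr 1
  funext i
  rw [eval_integral hg]
  fin_cases i <;>
    simp [madConstraints, integral_sub, integral_sub (integrable_const _) hid,
      integral_sub (integrable_const _) habs, hid, habs]

end Integrals

lemma madDualSet_le_integral (hf : ConcaveOn ℝ (Icc a b) f) (hfc : ContinuousOn f (Icc a b))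
    (hmhat : mhat ∈ Icc a b) {v : ℝ} (hv : v ∈ madDualSet f a b mhat ml mu dl du)
    {P : Measure ℝ} (hP : P ∈ DDMADSet a b mhat ml mu dl du) : v ≤ ∫ ρ, f ρ ∂P := by
  obtain ⟨γ, θ₁, θ₂, θ₃, θ₄, h₁, h₂, h₃, h₄, rfl, hfa, hfm, hfb⟩ := hv
  obtain ⟨hprob, hPK, hml, hmu, hdl, hdu⟩ := hP
  have hid := (integrable_id_of_measure_compl_eq_zero hPK).const_mul (θ₃ - θ₄)
  have habs := (integrable_abs_sub_of_measure_compl_eq_zero (mhat := mhat) hPK).const_mul (θ₁ - θ₂)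
  have hmono : ∫ ρ, ((θ₁ - θ₂) * |ρ - mhat| + (θ₃ - θ₄) * ρ + γ) ∂P ≤ ∫ ρ, f ρ ∂P := by
    refine integral_mono_ae ((habs.add hid).add (integrable_const γ))
      (hfc.integrable_of_measure_compl_eq_zero isCompact_Icc hPK) ?_
    filter_upwards [ae_iff.mpr hPK] with ρ hρ using hf.abs_sub_affine_le hmhat hfa hfm hfb hρ
  rw [integral_add (habs.fun_add hid) (integrable_const γ), integral_add habs hid,
    integral_const_mul, integral_const_mul, integral_const, probReal_univ, one_smul] at hmono
  nlinarith [mul_le_mul_of_nonneg_left hdl h₁, mul_le_mul_of_nonneg_left hdu h₂,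
    mul_le_mul_of_nonneg_left hml h₃, mul_le_mul_of_nonneg_left hmu h₄]

lemma exists_lagrange_multipliers_mad (hfc : ContinuousOn f (Icc a b))
    (hSlater : ∃ P₀ : Measure ℝ, IsProbabilityMeasure P₀ ∧ P₀ (Icc a b)ᶜ = 0 ∧
      ml < (∫ ρ, ρ ∂P₀) ∧ (∫ ρ, ρ ∂P₀) < mu ∧
      dl < (∫ ρ, |ρ - mhat| ∂P₀) ∧ (∫ ρ, |ρ - mhat| ∂P₀) < du)
    {v : ℝ} (hv : ∀ P ∈ DDMADSet a b mhat ml mu dl du, v ≤ ∫ ρ, f ρ ∂P) :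
    ∃ l : Fin 4 → ℝ, 0 ≤ l ∧
      ∀ ρ ∈ Icc a b, v ≤ f ρ + ∑ i, l i * madConstraints mhat ml mu dl du ρ i := by
  set A : Set ((Fin 4 → ℝ) × ℝ) :=
    (fun P : Measure ℝ => ∫ ρ, (madConstraints mhat ml mu dl du ρ, f ρ) ∂P) ''
      {P | IsProbabilityMeasure P ∧ P (Icc a b)ᶜ = 0}
  have hfeas : ∀ p ∈ A, p.1 ≤ 0 → v ≤ p.2 := by
    rintro _ ⟨P, ⟨hP, hPK⟩, rfl⟩ hle
    simp only [integral_madConstraints_prod hfc hPK] at hle ⊢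
    exact hv P ⟨hP, hPK, by simpa using hle 0, by simpa using hle 1, by simpa using hle 2,
      by simpa using hle 3⟩
  have hslater : ∃ p ∈ A, ∀ i, p.1 i < 0 := by
    obtain ⟨P₀, hP₀, hP₀K, h₁, h₂, h₃, h₄⟩ := hSlater
    refine ⟨_, ⟨P₀, ⟨hP₀, hP₀K⟩, rfl⟩, ?_⟩
    intro i
    fin_cases i <;> simp [integral_madConstraints_prod hfc hP₀K, h₁, h₂, h₃, h₄]
  obtain ⟨l, hl, hlag⟩ := exists_lagrange_multipliers
    (convex_integral_image (continuous_madConstraints.continuousOn.prodMk hfc) isCompact_Icc)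
    hfeas hslater
  refine ⟨l, hl, fun ρ hρ => ?_⟩
  simpa [integral_dirac] using hlag _ ⟨Measure.dirac ρ, ⟨inferInstance, by simp [hρ]⟩, rfl⟩

lemma mem_madDualSet_of_le (hfc : ContinuousOn f (Icc a b)) (hmhat : mhat ∈ Icc a b)
    (hSlater : ∃ P₀ : Measure ℝ, IsProbabilityMeasure P₀ ∧ P₀ (Icc a b)ᶜ = 0 ∧
      ml < (∫ ρ, ρ ∂P₀) ∧ (∫ ρ, ρ ∂P₀) < mu ∧
      dl < (∫ ρ, |ρ - mhat| ∂P₀) ∧ (∫ ρ, |ρ - mhat| ∂P₀) < du)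
    {v : ℝ} (hv : ∀ P ∈ DDMADSet a b mhat ml mu dl du, v ≤ ∫ ρ, f ρ ∂P) :
    v ∈ madDualSet f a b mhat ml mu dl du := by
  obtain ⟨l, hl, hlag⟩ := exists_lagrange_multipliers_mad hfc hSlater hv
  simp only [madConstraints, Fin.sum_univ_four, Fin.isValue, Matrix.cons_val_zero,
    Matrix.cons_val_one, Matrix.cons_val] at hlag
  have hab : a ≤ b := hmhat.1.trans hmhat.2
  refine ⟨v - (l 2 * dl - l 3 * du + l 0 * ml - l 1 * mu), l 2, l 3, l 0, l 1, hl 2, hl 3, hl 0,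
    hl 1, by ring, ?_, ?_, ?_⟩
  · linarith [hlag a ⟨le_rfl, hab⟩]
  · have := hlag mhat hmhat
    rw [sub_self, abs_zero] at this
    linarith
  · linarith [hlag b ⟨hab, le_rfl⟩]

theorem sInf_integral_eq_sSup_madDualSet (hf : ConcaveOn ℝ (Icc a b) f)
    (hfc : ContinuousOn f (Icc a b)) (hmhat : mhat ∈ Icc a b)
    (hSlater : ∃ P₀ : Measure ℝ, IsProbabilityMeasure P₀ ∧ P₀ (Icc a b)ᶜ = 0 ∧
      ml < (∫ ρ, ρ ∂P₀) ∧ (∫ ρ, ρ ∂P₀) < mu ∧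
      dl < (∫ ρ, |ρ - mhat| ∂P₀) ∧ (∫ ρ, |ρ - mhat| ∂P₀) < du) :
    sInf ((fun P => ∫ ρ, f ρ ∂P) '' DDMADSet a b mhat ml mu dl du) =
      sSup (madDualSet f a b mhat ml mu dl du) := by
  set S := (fun P => ∫ ρ, f ρ ∂P) '' DDMADSet a b mhat ml mu dl du
  have hab : a ≤ b := hmhat.1.trans hmhat.2
  have hS : S.Nonempty := by
    obtain ⟨P₀, hP₀, hP₀K, h₁, h₂, h₃, h₄⟩ := hSlater
    exact ⟨_, P₀, ⟨hP₀, hP₀K, h₁.le, h₂.le, h₃.le, h₄.le⟩, rfl⟩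
  have hweak : ∀ v ∈ madDualSet f a b mhat ml mu dl du, v ∈ lowerBounds S := by
    rintro v hv _ ⟨P, hP, rfl⟩
    exact madDualSet_le_integral hf hfc hmhat hv hP
  obtain ⟨x₀, -, hx₀⟩ := isCompact_Icc.exists_isMinOn (nonempty_Icc.2 hab) hfc
  have hmin : f x₀ ∈ madDualSet f a b mhat ml mu dl du :=
    ⟨f x₀, 0, 0, 0, 0, le_rfl, le_rfl, le_rfl, le_rfl, by ring,
      by simpa using hx₀ (left_mem_Icc.2 hab), by simpa using hx₀ hmhat,
      by simpa using hx₀ (right_mem_Icc.2 hab)⟩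
  have hstrong := mem_madDualSet_of_le hfc hmhat hSlater fun P hP =>
    csInf_le ⟨f x₀, hweak _ hmin⟩ ⟨P, hP, rfl⟩
  exact (IsGreatest.csSup_eq ⟨hstrong, fun v hv => le_csInf hS (hweak v hv)⟩).symm

end MADDuality

theorem stmt12_general (R C μ : ℝ)
    (n : ℕ) (hRC : C * (n : ℝ) ≤ R * μ)
    (a b mhat ml mu dl du : ℝ) (ha : 0 ≤ a)
    (hmhat : mhat ∈ Set.Ioo a b)
    (hSlater : ∃ P₀ : Measure ℝ, IsProbabilityMeasure P₀ ∧ P₀ (Set.Icc a b)ᶜ = 0 ∧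
      ml < (∫ ρ, ρ ∂P₀) ∧ (∫ ρ, ρ ∂P₀) < mu ∧
      dl < (∫ ρ, |ρ - mhat| ∂P₀) ∧ (∫ ρ, |ρ - mhat| ∂P₀) < du) :
    sInf ((fun P => ∫ ρ, revenueRate R C μ n ρ ∂P) '' DDMADSet a b mhat ml mu dl du) =
    sSup {v : ℝ | ∃ γ θ₁ θ₂ θ₃ θ₄ : ℝ, 0 ≤ θ₁ ∧ 0 ≤ θ₂ ∧ 0 ≤ θ₃ ∧ 0 ≤ θ₄ ∧
      v = γ + θ₁ * dl - θ₂ * du + θ₃ * ml - θ₄ * mu ∧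
      (θ₁ - θ₂) * |a - mhat| + (θ₃ - θ₄) * a + γ ≤ revenueRate R C μ n a ∧
      (θ₃ - θ₄) * mhat + γ ≤ revenueRate R C μ n mhat ∧
      (θ₁ - θ₂) * |b - mhat| + (θ₃ - θ₄) * b + γ ≤ revenueRate R C μ n b} := by
  have hsub : Icc a b ⊆ Ici 0 := fun x hx => ha.trans hx.1
  exact sInf_integral_eq_sSup_madDualSet
    ((concaveOn_revenueRate hRC).subset hsub (convex_Icc a b))
    ((continuousOn_revenueRate R C μ n).mono hsub) (Ioo_subset_Icc_self hmhat) hSlater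

/-- Strong duality for the worst-case expected revenue rate over the data-driven
MAD ambiguity set, under a Slater condition. -/
theorem stmt12 (R C μ : ℝ) (hR : 0 < R) (hC : 0 < C) (hμ : 0 < μ)
    (n : ℕ) (hn : 1 ≤ n) (hRC : C * (n : ℝ) ≤ R * μ)
    (a b mhat ml mu dl du : ℝ) (ha : 0 ≤ a) (hab : a < b)
    (hmhat : mhat ∈ Set.Ioo a b) (hm : ml ≤ mu) (hdlu : dl ≤ du)
    (hSlater : ∃ P₀ : Measure ℝ, IsProbabilityMeasure P₀ ∧ P₀ (Set.Icc a b)ᶜ = 0 ∧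
      ml < (∫ ρ, ρ ∂P₀) ∧ (∫ ρ, ρ ∂P₀) < mu ∧
      dl < (∫ ρ, |ρ - mhat| ∂P₀) ∧ (∫ ρ, |ρ - mhat| ∂P₀) < du) :
    sInf ((fun P => ∫ ρ, revenueRate R C μ n ρ ∂P) '' DDMADSet a b mhat ml mu dl du) =
    sSup {v : ℝ | ∃ γ θ₁ θ₂ θ₃ θ₄ : ℝ, 0 ≤ θ₁ ∧ 0 ≤ θ₂ ∧ 0 ≤ θ₃ ∧ 0 ≤ θ₄ ∧
      v = γ + θ₁ * dl - θ₂ * du + θ₃ * ml - θ₄ * mu ∧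
      (θ₁ - θ₂) * |a - mhat| + (θ₃ - θ₄) * a + γ ≤ revenueRate R C μ n a ∧
      (θ₃ - θ₄) * mhat + γ ≤ revenueRate R C μ n mhat ∧
      (θ₁ - θ₂) * |b - mhat| + (θ₃ - θ₄) * b + γ ≤ revenueRate R C μ n b} :=
  stmt12_general R C μ n hRC a b mhat ml mu dl du ha hmhat hSlater
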